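/- arXiv:1203.3000 — 5 statements merged into one kernel-verified Lean document; each statement's English description precedes it below -/
import Mathlib

section
/- Let n ≥ 1 and fix a composition (r_1,…,r_s) of n with partial sums R_k = r_1 + … + r_k (R_0 = 0). Define the block of an index i ∈ {1,…,n} to be the unique k with R_{k-1} < i ≤ R_k. Let M be the set of pairs (i,j) with 1 ≤ i < j ≤ n such that block(i) < block(j), and define a strict partial relation on M by (i',j') ≻ (i,j) iff either (i' = i, j < j', and block(j) = block(j')) or (j' = j, i' < i, and block(i') = block(i)). Then M has exactly one base, i.e., there is a unique subset S ⊆ M such that no two distinct elements of S are comparable under ≻ and for every γ ∈ M \ S there exists ξ ∈ S with γ ≻ ξ. -/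
/-!
The set `M` is the disjoint union of the rectangles `block k × block l` with `k < l`, and `p ≻ q`
happens only inside one rectangle, with `q` to the left of `p` in its row or below `p` in its
column. The base is the union of the antidiagonals `i + j = R k + R (l - 1) + 1` through the lower
left corners: two points of one antidiagonal are incomparable, and any other point of a rectangle
dominates the antidiagonal point in its row or in its column. Conversely, if an antidiagonal point
`a` were missing from a base `S`, it would dominate some `ξ ∈ S` off the antidiagonal, and `ξ`
dominates an antidiagonal point `η` strictly below `a`; by induction `η ∈ S`, contradicting that
`S` is an antichain.
-/

/-- `i` and `j` lie in the same diagonal block of the composition with partial sums `R`. -/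
def SameBlock (R : ℕ → ℕ) (s i j : ℕ) : Prop :=
  ∃ k, 1 ≤ k ∧ k ≤ s ∧ R (k-1) < i ∧ i ≤ R k ∧ R (k-1) < j ∧ j ≤ R k

/-- The set `M` of matrix positions strictly above the block diagonal. -/
def Mset (R : ℕ → ℕ) (s : ℕ) : Set (ℕ × ℕ) :=
  {p | 1 ≤ p.1 ∧ p.1 < p.2 ∧ p.2 ≤ R s ∧ ¬ SameBlock R s p.1 p.2}

/-- The relation `p ≻ q` on `M`. -/
def Succ (R : ℕ → ℕ) (s : ℕ) (p q : ℕ × ℕ) : Prop :=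
  (p.1 = q.1 ∧ q.2 < p.2 ∧ SameBlock R s q.2 p.2) ∨
  (p.2 = q.2 ∧ p.1 < q.1 ∧ SameBlock R s p.1 q.1)

/-- `S` is a base of `M`: an antichain under `≻` such that every element of `M \ S`
dominates some element of `S`. -/
def IsBase (R : ℕ → ℕ) (s : ℕ) (S : Set (ℕ × ℕ)) : Prop :=
  S ⊆ Mset R s ∧
  (∀ p ∈ S, ∀ q ∈ S, p ≠ q → ¬ Succ R s p q ∧ ¬ Succ R s q p) ∧
  (∀ γ ∈ Mset R s \ S, ∃ ξ ∈ S, Succ R s γ ξ)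

namespace Succ

variable {R : ℕ → ℕ} {s : ℕ} {p q : ℕ × ℕ}

lemma fst_add_snd_lt (h : Succ R s p q) : p.1 + q.2 < q.1 + p.2 := by
  rcases h with ⟨h₁, h₂, -⟩ | ⟨h₁, h₂, -⟩ <;> omega

lemma ne (h : Succ R s p q) : p ≠ q := by
  have := h.fst_add_snd_lt
  rintro rfl
  omega

lemma fst_add_snd_ne (h : Succ R s p q) : p.1 + p.2 ≠ q.1 + q.2 := by
  rcases h with ⟨h₁, h₂, -⟩ | ⟨h₁, h₂, -⟩ <;> omega

end Succ

namespace BlockNilradical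

def block (R : ℕ → ℕ) (k : ℕ) : Set ℕ := Set.Ioc (R (k - 1)) (R k)

def rect (R : ℕ → ℕ) (k l : ℕ) : Set (ℕ × ℕ) := block R k ×ˢ block R l

-- The antidiagonal of `rect R k l` through its lower left corner `(R k, R (l - 1) + 1)`.
def antidiag (R : ℕ → ℕ) (k l : ℕ) : Set (ℕ × ℕ) :=
  {p | p ∈ rect R k l ∧ p.1 + p.2 = R k + R (l - 1) + 1}

def antidiagBase (R : ℕ → ℕ) (s : ℕ) : Set (ℕ × ℕ) :=
  {p | ∃ k l, k < l ∧ l ≤ s ∧ p ∈ antidiag R k l}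

variable {R : ℕ → ℕ} {s k l i j : ℕ} {p q : ℕ × ℕ}

lemma one_le_of_mem_block (h : i ∈ block R k) : 1 ≤ k :=
  Nat.one_le_iff_ne_zero.2 (by rintro rfl; exact lt_irrefl _ (h.1.trans_le h.2))

lemma sameBlock_iff : SameBlock R s i j ↔ ∃ k ≤ s, i ∈ block R k ∧ j ∈ block R k := by
  constructor
  · rintro ⟨k, -, hks, hi₁, hi₂, hj₁, hj₂⟩
    exact ⟨k, hks, ⟨hi₁, hi₂⟩, ⟨hj₁, hj₂⟩⟩
  · rintro ⟨k, hks, hi, hj⟩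
    exact ⟨k, one_le_of_mem_block hi, hks, hi.1, hi.2, hj.1, hj.2⟩

lemma exists_mem_block (hR0 : R 0 = 0) (m : ℕ) (hi : 1 ≤ i) (him : i ≤ R m) :
    ∃ k ≤ m, i ∈ block R k := by
  induction m with
  | zero => omega
  | succ m ih =>
    by_cases h : R m < i
    · exact ⟨m + 1, le_rfl, h, him⟩
    · obtain ⟨k, hkm, hk⟩ := ih (by omega)
      exact ⟨k, by omega, hk⟩

section Monotone

variable (hR : MonotoneOn R (Set.Iic s))
include hR

lemma lt_of_mem_block_of_lt (hkl : k < l) (hl : l ≤ s) (hi : i ∈ block R k)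
    (hj : j ∈ block R l) : i < j :=
  calc i ≤ R k := hi.2
    _ ≤ R (l - 1) := hR (by simp; omega) (by simp; omega) (by omega)
    _ < j := hj.1

lemma eq_of_mem_block (hk : k ≤ s) (hl : l ≤ s) (hik : i ∈ block R k) (hil : i ∈ block R l) :
    k = l := by
  rcases lt_trichotomy k l with h | h | h
  · exact absurd (lt_of_mem_block_of_lt hR h hl hik hil) (lt_irrefl i)
  · exact h
  · exact absurd (lt_of_mem_block_of_lt hR h hk hil hik) (lt_irrefl i)

lemma mem_Mset_of_mem_rect (hkl : k < l) (hl : l ≤ s) (hp : p ∈ rect R k l) : p ∈ Mset R s := by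
  obtain ⟨hp₁, hp₂⟩ := hp
  refine ⟨by have := hp₁.1; omega, lt_of_mem_block_of_lt hR hkl hl hp₁ hp₂,
    hp₂.2.trans (hR (by simp; omega) (by simp) hl), ?_⟩
  rintro hsame
  obtain ⟨m, hm, h₁, h₂⟩ := sameBlock_iff.1 hsame
  have := eq_of_mem_block hR hm (by omega) h₁ hp₁
  have := eq_of_mem_block hR hm hl h₂ hp₂
  omega

lemma exists_mem_rect_of_mem_Mset (hR0 : R 0 = 0) (hp : p ∈ Mset R s) :
    ∃ k l, k < l ∧ l ≤ s ∧ p ∈ rect R k l := by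
  obtain ⟨hp₁, hp₁₂, hp₂s, hnot⟩ := hp
  obtain ⟨k, hks, hk⟩ := exists_mem_block hR0 s hp₁ (by omega)
  obtain ⟨l, hls, hl⟩ := exists_mem_block hR0 s (by omega) hp₂s
  refine ⟨k, l, ?_, hls, hk, hl⟩
  rcases lt_trichotomy k l with h | rfl | h
  · exact h
  · exact absurd (sameBlock_iff.2 ⟨k, hks, hk, hl⟩) hnot
  · exact absurd (lt_of_mem_block_of_lt hR h hks hl hk) (by omega)

lemma mem_rect_of_succ (hk : k ≤ s) (hl : l ≤ s) (hp : p ∈ rect R k l) (h : Succ R s p q) :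
    q ∈ rect R k l := by
  obtain ⟨hp₁, hp₂⟩ := hp
  rcases h with ⟨h₁, -, hsame⟩ | ⟨h₂, -, hsame⟩
  · obtain ⟨m, hm, hq₂, hp₂'⟩ := sameBlock_iff.1 hsame
    obtain rfl := eq_of_mem_block hR hm hl hp₂' hp₂
    exact ⟨h₁ ▸ hp₁, hq₂⟩
  · obtain ⟨m, hm, hp₁', hq₁⟩ := sameBlock_iff.1 hsame
    obtain rfl := eq_of_mem_block hR hm hk hp₁' hp₁
    exact ⟨hq₁, h₂ ▸ hp₂⟩

lemma exists_succ_mem_antidiag (hkl : k < l) (hl : l ≤ s) (hp : p ∈ rect R k l)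
    (hpa : p ∉ antidiag R k l) : ∃ q ∈ antidiag R k l, Succ R s p q := by
  obtain ⟨i, j⟩ := p
  obtain ⟨⟨hi₁, hi₂⟩, ⟨hj₁, hj₂⟩⟩ := hp
  have hRkl : R k ≤ R (l - 1) := hR (by simp; omega) (by simp; omega) (by omega)
  set c := R k + R (l - 1) + 1
  rcases Nat.lt_or_gt_of_ne (fun h => hpa ⟨⟨⟨hi₁, hi₂⟩, ⟨hj₁, hj₂⟩⟩, h⟩) with h | h
  · refine ⟨(c - j, j), ⟨⟨⟨by omega, by omega⟩, hj₁, hj₂⟩, by omega⟩, Or.inr ⟨rfl, by omega, ?_⟩⟩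
    exact sameBlock_iff.2 ⟨k, by omega, ⟨hi₁, hi₂⟩, ⟨by omega, by omega⟩⟩
  · refine ⟨(i, c - i), ⟨⟨⟨hi₁, hi₂⟩, by omega, by omega⟩, by omega⟩, Or.inl ⟨rfl, by omega, ?_⟩⟩
    exact sameBlock_iff.2 ⟨l, hl, ⟨by omega, by omega⟩, ⟨hj₁, hj₂⟩⟩

lemma isBase_antidiagBase (hR0 : R 0 = 0) : IsBase R s (antidiagBase R s) := by
  refine ⟨fun p ⟨k, l, hkl, hl, hp⟩ => mem_Mset_of_mem_rect hR hkl hl hp.1, ?antichain, ?cover⟩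
  case antichain =>
    suffices ∀ p ∈ antidiagBase R s, ∀ q ∈ antidiagBase R s, ¬ Succ R s p q from
      fun p hp q hq _ => ⟨this p hp q hq, this q hq p hp⟩
    rintro p ⟨k, l, hkl, hl, hp, hpc⟩ q ⟨k', l', hkl', hl', hq, hqc⟩ hpq
    obtain ⟨hq₁, hq₂⟩ := mem_rect_of_succ hR (by omega) hl hp hpq
    obtain rfl := eq_of_mem_block hR (by omega) (by omega) hq₁ hq.1
    obtain rfl := eq_of_mem_block hR hl hl' hq₂ hq.2
    exact hpq.fst_add_snd_ne (hpc.trans hqc.symm)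
  case cover =>
    rintro p ⟨hpM, hpB⟩
    obtain ⟨k, l, hkl, hl, hp⟩ := exists_mem_rect_of_mem_Mset hR hR0 hpM
    obtain ⟨q, hq, hpq⟩ :=
      exists_succ_mem_antidiag hR hkl hl hp fun hpa => hpB ⟨k, l, hkl, hl, hpa⟩
    exact ⟨q, ⟨k, l, hkl, hl, hq⟩, hpq⟩

lemma antidiag_subset_of_isBase {S : Set (ℕ × ℕ)} (hS : IsBase R s S) (hkl : k < l)
    (hl : l ≤ s) : antidiag R k l ⊆ S := by
  intro a ha
  -- Along `a ≻ ξ ≻ η` the row grows, so the induction runs down the antidiagonal.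
  induction hm : R k - a.1 using Nat.strong_induction_on generalizing a with
  | _ m ih =>
  by_contra haS
  obtain ⟨ξ, hξS, haξ⟩ := hS.2.2 a ⟨mem_Mset_of_mem_rect hR hkl hl ha.1, haS⟩
  have hξ : ξ ∈ rect R k l := mem_rect_of_succ hR (by omega) hl ha.1 haξ
  have hξa : ξ ∉ antidiag R k l := by
    intro hξa
    exact haξ.fst_add_snd_ne (ha.2.trans hξa.2.symm)
  obtain ⟨η, hη, hξη⟩ := exists_succ_mem_antidiag hR hkl hl hξ hξa
  have hrow : a.1 < η.1 := by
    have := haξ.fst_add_snd_lt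
    have := hξη.fst_add_snd_lt
    have := ha.2
    have := hη.2
    omega
  have hηS : η ∈ S := ih (R k - η.1) (by have := hη.1.1.2; omega) hη rfl
  exact (hS.2.1 ξ hξS η hηS hξη.ne).1 hξη

lemma eq_antidiagBase_of_isBase (hR0 : R 0 = 0) {S : Set (ℕ × ℕ)} (hS : IsBase R s S) :
    S = antidiagBase R s := by
  refine Set.Subset.antisymm (fun p hpS => ?_) fun p ⟨k, l, hkl, hl, hp⟩ =>
    antidiag_subset_of_isBase hR hS hkl hl hp
  obtain ⟨k, l, hkl, hl, hp⟩ := exists_mem_rect_of_mem_Mset hR hR0 (hS.1 hpS)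
  by_contra hpB
  obtain ⟨q, hq, hpq⟩ :=
    exists_succ_mem_antidiag hR hkl hl hp fun hpa => hpB ⟨k, l, hkl, hl, hpa⟩
  exact (hS.2.1 p hpS q (antidiag_subset_of_isBase hR hS hkl hl hq) hpq.ne).1 hpq

end Monotone

end BlockNilradical

open BlockNilradical in
theorem base_exists_unique_general (s : ℕ) (R : ℕ → ℕ)
    (hR0 : R 0 = 0) (hmono : ∀ k < s, R k < R (k+1)) :
    ∃! S : Set (ℕ × ℕ), IsBase R s S := by
  have hR : MonotoneOn R (Set.Iic s) :=
    monotoneOn_of_le_succ Set.ordConnected_Iic fun k _ _ hk =>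
      (hmono k (Order.succ_le_iff.1 hk)).le
  exact ⟨antidiagBase R s, isBase_antidiagBase hR hR0,
    fun S hS => eq_antidiagBase_of_isBase hR hR0 hS⟩

theorem base_exists_unique (n s : ℕ) (hn : 1 ≤ n) (hs : 1 ≤ s) (R : ℕ → ℕ)
    (hR0 : R 0 = 0) (hmono : ∀ k < s, R k < R (k+1)) (hRs : R s = n) :
    ∃! S : Set (ℕ × ℕ), IsBase R s S :=
  base_exists_unique_general s R hR0 hmono
end

section
/- Lemma 2.2: With the combinatorial setup (M, ≻, base S): if (i,j) ∈ S and i is not equal to R_k for any k (i.e., i is not the last index of its block), then there exists j̃ < j with (i+1, j̃) ∈ S. -/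
section Blocks

variable {R : ℕ → ℕ} {s i : ℕ}

lemma exists_block_of_lt_of_le (h0 : R 0 < i) (hs : i ≤ R s) :
    ∃ k, 1 ≤ k ∧ k ≤ s ∧ R (k-1) < i ∧ i ≤ R k := by
  classical
  have hP : ∃ m, m ≤ s ∧ i ≤ R m := ⟨s, le_rfl, hs⟩
  obtain ⟨hks, hik⟩ := Nat.find_spec hP
  have hk1 : 1 ≤ Nat.find hP := Nat.one_le_iff_ne_zero.2 fun h => by
    rw [h] at hik
    omega
  have hprev := Nat.find_min hP (show Nat.find hP - 1 < Nat.find hP by omega)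
  exact ⟨Nat.find hP, hk1, hks, lt_of_not_ge (not_and.1 hprev (by omega)), hik⟩

lemma sameBlock_self_succ (h0 : R 0 < i) (hs : i ≤ R s) (hne : ∀ k ≤ s, i ≠ R k) :
    SameBlock R s i (i + 1) := by
  obtain ⟨k, hk1, hks, hlo, hhi⟩ := exists_block_of_lt_of_le h0 hs
  have := hne k hks
  exact ⟨k, hk1, hks, hlo, hhi, by omega, by omega⟩

lemma sameBlock_of_sameBlock_succ {x : ℕ} (hne : ∀ k ≤ s, i ≠ R k)
    (h : SameBlock R s (i + 1) x) : SameBlock R s i x := by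
  obtain ⟨k, hk1, hks, hlo, hhi, hxlo, hxhi⟩ := h
  have := hne (k - 1) (by omega)
  exact ⟨k, hk1, hks, by omega, by omega, hxlo, hxhi⟩

end Blocks

namespace IsBase

variable {R : ℕ → ℕ} {s : ℕ} {S : Set (ℕ × ℕ)}

lemma not_succ (hS : IsBase R s S) {p q : ℕ × ℕ} (hp : p ∈ S) (hq : q ∈ S) :
    ¬ Succ R s p q := by
  intro h
  have hpq : p ≠ q := by
    rintro rfl
    rcases h with ⟨-, h, -⟩ | ⟨-, h, -⟩ <;> exact lt_irrefl _ h
  exact (hS.2.1 p hp q hq hpq).1 h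

end IsBase

theorem lemma_2_2_general (s : ℕ) (R : ℕ → ℕ)
    (hR0 : R 0 = 0)
    (S : Set (ℕ × ℕ)) (hS : IsBase R s S)
    (i j : ℕ) (hij : (i, j) ∈ S) (hne : ∀ k ≤ s, i ≠ R k) :
    ∃ j', j' < j ∧ (i + 1, j') ∈ S := by
  obtain ⟨hi1, hij_lt, hjR, hij_block⟩ := hS.1 hij
  have hblock : SameBlock R s i (i + 1) :=
    sameBlock_self_succ (by omega) (by omega) hne
  have hsucc_lt : i + 1 < j :=
    lt_of_le_of_ne (hij_lt : i < j) fun h => hij_block (h ▸ hblock)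
  have hM : (i + 1, j) ∈ Mset R s :=
    ⟨by omega, hsucc_lt, hjR, fun h => hij_block (sameBlock_of_sameBlock_succ hne h)⟩
  have hnotS : (i + 1, j) ∉ S := fun h =>
    hS.not_succ hij h (Or.inr ⟨rfl, Nat.lt_succ_self i, hblock⟩)
  obtain ⟨⟨a, b⟩, hξ, hdom⟩ := hS.2.2 _ ⟨hM, hnotS⟩
  rcases hdom with ⟨rfl, hb, -⟩ | ⟨rfl, ha, hab⟩
  · exact ⟨b, hb, hξ⟩
  · exact (hS.not_succ hij hξ
      (Or.inr ⟨rfl, Nat.lt_of_succ_lt ha, sameBlock_of_sameBlock_succ hne hab⟩)).elim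

theorem lemma_2_2 (n s : ℕ) (hn : 1 ≤ n) (hs : 1 ≤ s) (R : ℕ → ℕ)
    (hR0 : R 0 = 0) (hmono : ∀ k < s, R k < R (k+1)) (hRs : R s = n)
    (S : Set (ℕ × ℕ)) (hS : IsBase R s S)
    (i j : ℕ) (hij : (i, j) ∈ S) (hne : ∀ k ≤ s, i ≠ R k) :
    ∃ j', j' < j ∧ (i + 1, j') ∈ S :=
  lemma_2_2_general s R hR0 S hS i j hij hne
end

section
/- Corollary of Lemma 2.2: With the combinatorial setup (M, ≻, base S): suppose (i,j) ∈ S with R_{k-1} < i < R_k for some k. Then for every ĩ with i < ĩ ≤ R_k there exists j̃ < j with (ĩ, j̃) ∈ S. -/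
/-! Since `(i, j) ≻ (i', j)`, the antichain property keeps `(i', j)` out of `S`, so `(i', j)`
dominates some `ξ ∈ S`. If `ξ` were `(a, j)` with `i' < a` in the same block, then also
`(i, j) ≻ ξ`, again contradicting the antichain property; so `ξ = (i', j')` with `j' < j`. -/

section Blocks

variable {R : ℕ → ℕ} {s : ℕ}

theorem eq_of_mem_block (hR : StrictMonoOn R (Set.Iic s)) {k k' x : ℕ} (hk : k ≤ s)
    (hk' : k' ≤ s) (hx : R (k - 1) < x ∧ x ≤ R k) (hx' : R (k' - 1) < x ∧ x ≤ R k') :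
    k = k' := by
  wlog hlt : k < k' generalizing k k'
  · obtain hlt' | heq := (not_lt.mp hlt).lt_or_eq
    · exact (this hk' hk hx' hx hlt').symm
    · exact heq.symm
  have : R k ≤ R (k' - 1) := hR.monotoneOn (by simp; omega) (by simp; omega) (by omega)
  omega

theorem SameBlock.trans (hR : StrictMonoOn R (Set.Iic s)) {x y z : ℕ}
    (hxy : SameBlock R s x y) (hyz : SameBlock R s y z) : SameBlock R s x z := by
  obtain ⟨k, hk1, hks, hx1, hx2, hy1, hy2⟩ := hxy
  obtain ⟨k', -, hks', hy1', hy2', hz1, hz2⟩ := hyz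
  obtain rfl := eq_of_mem_block hR hks hks' ⟨hy1, hy2⟩ ⟨hy1', hy2'⟩
  exact ⟨k, hk1, hks, hx1, hx2, hz1, hz2⟩

theorem Succ.ne_s5 {p q : ℕ × ℕ} (h : Succ R s p q) : p ≠ q := by
  rintro rfl
  rcases h with ⟨-, h, -⟩ | ⟨-, h, -⟩ <;> exact lt_irrefl _ h

theorem IsBase.not_succ_s5 {S : Set (ℕ × ℕ)} (hS : IsBase R s S) {p q : ℕ × ℕ} (hp : p ∈ S)
    (hq : q ∈ S) : ¬ Succ R s p q :=
  fun h ↦ (hS.2.1 p hp q hq h.ne_s5).1 h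

end Blocks

theorem corollary_2_2_general (s : ℕ) (R : ℕ → ℕ)
    (hmono : ∀ k < s, R k < R (k+1))
    (S : Set (ℕ × ℕ)) (hS : IsBase R s S)
    (i j k : ℕ) (hk1 : 1 ≤ k) (hk2 : k ≤ s)
    (hi1 : R (k-1) < i) (hi2 : i < R k) (hij : (i, j) ∈ S) :
    ∀ i', i < i' → i' ≤ R k → ∃ j', j' < j ∧ (i', j') ∈ S := by
  intro i' hii' hi'k
  have hR : StrictMonoOn R (Set.Iic s) := strictMonoOn_Iic_of_lt_succ hmono
  obtain ⟨hi_pos, hij_lt, hjs, hij_block⟩ := hS.1 hij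
  have hii'_block : SameBlock R s i i' := ⟨k, hk1, hk2, hi1, hi2.le, by omega, hi'k⟩
  have hi'j_lt : i' < j := by
    by_contra! hji'
    exact hij_block ⟨k, hk1, hk2, hi1, hi2.le, by omega, by omega⟩
  have hi'j_mem : (i', j) ∈ Mset R s :=
    ⟨by omega, hi'j_lt, hjs, fun h ↦ hij_block (hii'_block.trans hR h)⟩
  have hi'j_notMem : (i', j) ∉ S := fun h ↦ hS.not_succ_s5 hij h (Or.inr ⟨rfl, hii', hii'_block⟩)
  obtain ⟨⟨a, b⟩, hξ, ⟨rfl, hbj, -⟩ | ⟨rfl, hi'a, hi'a_block⟩⟩ := hS.2.2 _ ⟨hi'j_mem, hi'j_notMem⟩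
  · exact ⟨b, hbj, hξ⟩
  · exact absurd (Or.inr ⟨rfl, hii'.trans hi'a, hii'_block.trans hR hi'a_block⟩)
      (hS.not_succ_s5 hij hξ)

theorem corollary_2_2 (n s : ℕ) (hn : 1 ≤ n) (hs : 1 ≤ s) (R : ℕ → ℕ)
    (hR0 : R 0 = 0) (hmono : ∀ k < s, R k < R (k+1)) (hRs : R s = n)
    (S : Set (ℕ × ℕ)) (hS : IsBase R s S)
    (i j k : ℕ) (hk1 : 1 ≤ k) (hk2 : k ≤ s)
    (hi1 : R (k-1) < i) (hi2 : i < R k) (hij : (i, j) ∈ S) :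
    ∀ i', i < i' → i' ≤ R k → ∃ j', j' < j ∧ (i', j') ∈ S :=
  corollary_2_2_general s R hmono S hS i j k hk1 hk2 hi1 hi2 hij
end

section
/- Let K be a field, n ≥ 1, g an n×n upper unitriangular matrix over K (g_{ii} = 1 and g_{ij} = 0 for i > j), and x any n×n matrix over K. Then for all 1 ≤ p, q ≤ n, the lower-left justified minor of g·x·g⁻¹ on rows {p, p+1, …, n} and columns {1, 2, …, q} equals the corresponding minor of x; i.e., det((g x g⁻¹)_{I×J}) = det(x_{I×J}) where I = {p,…,n} and J = {1,…,q} (with |I| = |J|). -/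
/-!
Since `I = {p, …, n}` is a final segment and `J = {1, …, q}` an initial segment, upper
triangularity of `g` and `g⁻¹` kills every term of `g x g⁻¹` that leaves the blocks, so
`(g x g⁻¹)_{I×J} = g_{I×I} · x_{I×J} · (g⁻¹)_{J×J}`, and both outer factors are unitriangular.
-/

open Function Set

namespace Matrix

variable {ι κ ν ν' R : Type*} [LinearOrder ι]

section Semiring

variable [Fintype ι] [Fintype κ] [NonUnitalNonAssocSemiring R] {r : κ → ι}

theorem IsUpperTriangular.submatrix_mul_eq_of_isUpperSet {g : Matrix ι ι R}
    (hg : g.IsUpperTriangular) (hr : Injective r) (hup : IsUpperSet (range r))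
    (y : Matrix ι ν R) (c : ν' → ν) :
    (g * y).submatrix r c = g.submatrix r r * y.submatrix r c := by
  ext t s
  refine (Fintype.sum_of_injective r hr _ _ (fun k hk => ?_) fun _ => rfl).symm
  exact mul_eq_zero_of_left (hg (lt_of_not_ge fun hle => hk (hup hle ⟨t, rfl⟩))) _

theorem IsUpperTriangular.submatrix_mul_eq_of_isLowerSet {h : Matrix ι ι R}
    (hh : h.IsUpperTriangular) (hr : Injective r) (hlow : IsLowerSet (range r))
    (y : Matrix ν ι R) (c : ν' → ν) :
    (y * h).submatrix c r = y.submatrix c r * h.submatrix r r := by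
  ext s t
  refine (Fintype.sum_of_injective r hr _ _ (fun k hk => ?_) fun _ => rfl).symm
  exact mul_eq_zero_of_right _ (hh (lt_of_not_ge fun hle => hk (hlow hle ⟨t, rfl⟩)))

end Semiring

theorem IsUpperTriangular.det_submatrix_eq_one [CommRing R] [LinearOrder κ] [Fintype κ]
    {g : Matrix ι ι R} (hg : g.IsUpperTriangular) (hdiag : ∀ i, g i i = 1) {r : κ → ι}
    (hr : StrictMono r) : (g.submatrix r r).det = 1 := by
  rw [det_of_isUpperTriangular (M := g.submatrix r r) fun _ _ h => hg (hr h)]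
  simp [hdiag]

end Matrix

open Matrix

theorem lower_left_minors_invariant (K : Type*) [Field K] (n : ℕ)
    (g x : Matrix (Fin n) (Fin n) K)
    (hgd : ∀ i, g i i = 1) (hgl : ∀ i j : Fin n, (j : ℕ) < (i : ℕ) → g i j = 0)
    (p q : ℕ) (hpq : p + q = n) :
    Matrix.det ((g * x * g⁻¹).submatrix
      (fun t : Fin q => (⟨p + t, by have := t.isLt; omega⟩ : Fin n))
      (fun t : Fin q => (⟨t, by have := t.isLt; omega⟩ : Fin n)))
    = Matrix.det (x.submatrix
      (fun t : Fin q => (⟨p + t, by have := t.isLt; omega⟩ : Fin n))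
      (fun t : Fin q => (⟨t, by have := t.isLt; omega⟩ : Fin n))) := by
  set r : Fin q → Fin n := fun t => ⟨p + t, by have := t.isLt; omega⟩
  set c : Fin q → Fin n := fun t => ⟨t, by have := t.isLt; omega⟩
  have hr : StrictMono r := fun _ _ h => Nat.add_lt_add_left h p
  have hc : StrictMono c := fun _ _ h => h
  have hr_up : IsUpperSet (range r) := by
    rintro _ k hk ⟨t, rfl⟩
    simp only [r, Fin.le_def] at hk
    exact ⟨⟨k - p, by omega⟩, Fin.ext (by simp only [r]; omega)⟩
  have hc_low : IsLowerSet (range c) := by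
    rintro _ k hk ⟨t, rfl⟩
    exact ⟨⟨k, by simp only [c, Fin.le_def] at hk; omega⟩, rfl⟩
  have hg : g.IsUpperTriangular := hgl
  have hdet : IsUnit g.det := by
    rw [← submatrix_id_id g, hg.det_submatrix_eq_one hgd strictMono_id]
    exact isUnit_one
  have : Invertible g := g.invertibleOfIsUnitDet hdet
  have hginv : g⁻¹.IsUpperTriangular := blockTriangular_inv_of_blockTriangular hg
  -- read off from `(g * g⁻¹)_{c×c} = g_{c×c} * g⁻¹_{c×c}`
  have hginv_det : (g⁻¹.submatrix c c).det = 1 := by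
    have h := congrArg det (hginv.submatrix_mul_eq_of_isLowerSet hc.injective hc_low g c)
    rwa [mul_nonsing_inv g hdet, submatrix_one _ hc.injective, det_one, det_mul,
      hg.det_submatrix_eq_one hgd hc, one_mul, eq_comm] at h
  rw [hginv.submatrix_mul_eq_of_isLowerSet hc.injective hc_low,
    hg.submatrix_mul_eq_of_isUpperSet hr.injective hr_up, det_mul, det_mul,
    hg.det_submatrix_eq_one hgd hr, hginv_det, one_mul, mul_one]
end

section
/- With the combinatorial setup (M, ≻, base S): the iterative construction of the base terminates and produces S; precisely, define M_0 = M, S_1 = the set of minimal elements of M_0 (elements γ with no ξ ∈ M_0, γ ≻ ξ), and inductively M_t = M_{t-1} \ (S_t ∪ {γ ∈ M_{t-1} : ∃ ξ ∈ S_t, γ ≻ ξ}), S_{t+1} = minimal elements of M_t. Then the union S_1 ∪ S_2 ∪ … (which stabilizes since M is finite) equals the base S of M. -/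
/-- The minimal elements of a subset A with respect to the relation. -/
def minimalsOf (R : ℕ → ℕ) (s : ℕ) (A : Set (ℕ × ℕ)) : Set (ℕ × ℕ) :=
  {γ ∈ A | ∀ ξ ∈ A, ¬ Succ R s γ ξ}

/-- The iterative sequence of sets from the construction of the base. -/
def Mseq (R : ℕ → ℕ) (s : ℕ) : ℕ → Set (ℕ × ℕ)
  | 0 => Mset R s
  | t + 1 =>
      {γ ∈ Mseq R s t | γ ∉ minimalsOf R s (Mseq R s t) ∧
        ¬ ∃ ξ ∈ minimalsOf R s (Mseq R s t), Succ R s γ ξ}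

lemma succ_irrefl (R : ℕ → ℕ) (s : ℕ) (p : ℕ × ℕ) : ¬ Succ R s p p := by
  rintro (⟨_, h, _⟩ | ⟨_, h, _⟩) <;> omega

lemma succ_measure (R : ℕ → ℕ) (s : ℕ) {p q : ℕ × ℕ} (hq : q ∈ Mset R s)
    (h : Succ R s p q) : q.2 - q.1 < p.2 - p.1 := by
  obtain ⟨hq1, hq2, hq3, -⟩ := hq
  rcases h with ⟨h1, h2, -⟩ | ⟨h1, h2, -⟩ <;> omega

lemma mseq_succ_subset (R : ℕ → ℕ) (s t : ℕ) : Mseq R s (t+1) ⊆ Mseq R s t :=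
  fun _ hp => hp.1

lemma mseq_subset_mset (R : ℕ → ℕ) (s : ℕ) : ∀ t, Mseq R s t ⊆ Mset R s := by
  intro t
  induction t with
  | zero => exact fun p hp => hp
  | succ u ih => exact fun p hp => ih (mseq_succ_subset R s u hp)

lemma mseq_antitone (R : ℕ → ℕ) (s : ℕ) {u t : ℕ} (h : u ≤ t) :
    Mseq R s t ⊆ Mseq R s u := by
  induction h with
  | refl => exact fun _ hp => hp
  | step _ ih => exact fun p hp => ih (mseq_succ_subset R s _ hp)

lemma mset_finite (R : ℕ → ℕ) (s : ℕ) : (Mset R s).Finite := by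
  apply Set.Finite.subset ((Set.finite_Iic (R s)).prod (Set.finite_Iic (R s)))
  rintro ⟨a, b⟩ ⟨h1, h2, h3, -⟩
  constructor <;> simp only [Set.mem_Iic] <;> omega

lemma minimals_nonempty (R : ℕ → ℕ) (s : ℕ) {A : Set (ℕ × ℕ)} (hA : A.Nonempty)
    (hsub : A ⊆ Mset R s) : (minimalsOf R s A).Nonempty := by
  have hfin : A.Finite := (mset_finite R s).subset hsub
  obtain ⟨x, hxA, hmin⟩ := Set.exists_min_image A (fun p => p.2 - p.1) hfin hA
  refine ⟨x, hxA, fun ξ hξ hsucc => ?_⟩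
  have h1 := succ_measure R s (hsub hξ) hsucc
  have h2 := hmin ξ hξ
  omega

lemma removal (R : ℕ → ℕ) (s t : ℕ) {p : ℕ × ℕ} (hp : p ∈ Mseq R s t)
    (hp' : p ∉ Mseq R s (t+1)) :
    p ∈ minimalsOf R s (Mseq R s t) ∨
      ∃ ξ ∈ minimalsOf R s (Mseq R s t), Succ R s p ξ := by
  by_contra h
  push_neg at h
  exact hp' ⟨hp, h.1, by push_neg; exact h.2⟩

lemma exists_exit {P : ℕ → Prop} {t : ℕ} (h0 : P 0) (ht : ¬ P t) :
    ∃ u, P u ∧ ¬ P (u+1) := by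
  induction t with
  | zero => exact absurd h0 ht
  | succ n ih =>
    by_cases h : P n
    · exact ⟨n, h, ht⟩
    · exact ih h

lemma minimals_sub_S (R : ℕ → ℕ) (s : ℕ) {S : Set (ℕ × ℕ)} (hS : IsBase R s S) :
    ∀ t, minimalsOf R s (Mseq R s t) ⊆ S := by
  obtain ⟨hS1, hS2, hS3⟩ := hS
  intro t
  induction t using Nat.strong_induction_on with
  | _ t ih =>
    intro q hq
    obtain ⟨hqM, hqmin⟩ := hq
    by_contra hqS
    obtain ⟨ξ, hξS, hsucc⟩ := hS3 q ⟨mseq_subset_mset R s t hqM, hqS⟩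
    by_cases hξ : ξ ∈ Mseq R s t
    · exact hqmin ξ hξ hsucc
    · obtain ⟨u, hu1, hu2⟩ := exists_exit (P := fun u => ξ ∈ Mseq R s u) (hS1 hξS) hξ
      have hut : u < t := by
        by_contra h
        exact hξ (mseq_antitone R s (le_of_not_gt h) hu1)
      rcases removal R s u hu1 hu2 with hmin | ⟨η, hη, hsη⟩
      · have hq1 : q ∈ Mseq R s (u+1) := mseq_antitone R s hut hqM
        exact hq1.2.2 ⟨ξ, hmin, hsucc⟩
      · have hηS : η ∈ S := ih u hut hη
        have hne : ξ ≠ η := by rintro rfl; exact succ_irrefl R s ξ hsη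
        exact (hS2 ξ hξS η hηS hne).1 hsη

lemma mseq_eventually_empty (R : ℕ → ℕ) (s : ℕ) : ∃ T, Mseq R s T = ∅ := by
  have hfinM := mset_finite R s
  have key : ∀ t, (Mseq R s t).Nonempty → (Mseq R s t).ncard + t ≤ (Mset R s).ncard := by
    intro t
    induction t with
    | zero => intro _; simp [Mseq]
    | succ u ih =>
      intro hne
      have hneu : (Mseq R s u).Nonempty := hne.mono (mseq_succ_subset R s u)
      obtain ⟨x, hx⟩ := minimals_nonempty R s hneu (mseq_subset_mset R s u)
      have hss : Mseq R s (u+1) ⊂ Mseq R s u :=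
        ⟨mseq_succ_subset R s u, fun h => (h hx.1).2.1 hx⟩
      have hlt := Set.ncard_lt_ncard hss (hfinM.subset (mseq_subset_mset R s u))
      have := ih hneu
      omega
  refine ⟨(Mset R s).ncard + 1, ?_⟩
  by_contra h
  have hne := Set.nonempty_iff_ne_empty.mpr h
  have h1 := key _ hne
  have h2 : 0 < (Mseq R s ((Mset R s).ncard + 1)).ncard :=
    (Set.ncard_pos (hfinM.subset (mseq_subset_mset R s _))).mpr hne
  omega

theorem base_iterative_construction (n s : ℕ) (hn : 1 ≤ n) (hs : 1 ≤ s) (R : ℕ → ℕ)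
    (hR0 : R 0 = 0) (hmono : ∀ k < s, R k < R (k+1)) (hRs : R s = n)
    (S : Set (ℕ × ℕ)) (hS : IsBase R s S) :
    (⋃ t : ℕ, minimalsOf R s (Mseq R s t)) = S := by
  apply Set.Subset.antisymm
  · exact Set.iUnion_subset (fun t => minimals_sub_S R s hS t)
  · intro p hp
    obtain ⟨T, hT⟩ := mseq_eventually_empty R s
    have hp0 : p ∈ Mseq R s 0 := hS.1 hp
    have hpT : p ∉ Mseq R s T := by simp [hT]
    obtain ⟨u, hu1, hu2⟩ := exists_exit (P := fun u => p ∈ Mseq R s u) hp0 hpT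
    rcases removal R s u hu1 hu2 with hmin | ⟨η, hη, hsη⟩
    · exact Set.mem_iUnion.mpr ⟨u, hmin⟩
    · have hηS : η ∈ S := minimals_sub_S R s hS u hη
      have hne : p ≠ η := by rintro rfl; exact succ_irrefl R s p hsη
      exact absurd hsη (hS.2.1 p hp η hηS hne).1
end
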